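/- Define u₄ : ℝ² → ℝ by u₄(x₁,x₂) = 0 if x₂ ≤ 0; u₄(x₁,x₂) = x₂/x₁ if x₂ ≥ 0, x₁ ≠ 0 and x₁²/2 ≥ x₂; and u₄(x₁,x₂) = x₁(x₂+1)/(x₁²+2) otherwise. Consider the planar system ẋ₁ = 1/2, ẋ₂ = u₄(x₁,x₂). The two curves y₁(t) = (t/2, 0) and y₂(t) = (t/2, t²/8), defined for t ≥ 0, are both solutions of this system with initial condition (0,0): each is differentiable with y'(t) equal to (1/2, u₄(y(t))) for all t ≥ 0 and y(0) = (0,0). Moreover y₁ ≠ y₂ (for instance y₁(t) ≠ y₂(t) for every t > 0). Hence the system has non-unique solutions from the origin. -/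

import Mathlib

/-! Along `y₂(t) = (t/2, t²/8)` we have `x₂ = x₁²/2`, the boundary of the region where
`u₄ = x₂/x₁`; there `u₄(y₂(t)) = t/4 = y₂'(t)₂`, while `u₄ = 0` on the whole axis `x₂ = 0`,
so `y₁` is a second solution through the origin. -/

open Set Filter

/-- The fourth component of the parametric optimizer of Robinson's counterexample. -/
noncomputable def u4 (x : ℝ × ℝ) : ℝ :=
  if x.2 ≤ 0 then 0
  else if 0 ≤ x.2 ∧ x.1 ≠ 0 ∧ x.2 ≤ x.1 ^ 2 / 2 then x.2 / x.1
  else x.1 * (x.2 + 1) / (x.1 ^ 2 + 2)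

theorem u4_of_nonpos {x : ℝ × ℝ} (h : x.2 ≤ 0) : u4 x = 0 := if_pos h

theorem u4_of_pos_of_le {x : ℝ × ℝ} (hpos : 0 < x.2) (h₁ : x.1 ≠ 0) (hle : x.2 ≤ x.1 ^ 2 / 2) :
    u4 x = x.2 / x.1 := by
  rw [u4, if_neg hpos.not_ge, if_pos ⟨hpos.le, h₁, hle⟩]

theorem u4_parabola {t : ℝ} (ht : 0 ≤ t) : u4 (t / 2, t ^ 2 / 8) = t / 4 := by
  rcases ht.eq_or_lt with rfl | ht
  · simp [u4_of_nonpos]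
  · rw [u4_of_pos_of_le (by positivity) (by positivity) (le_of_eq (by ring))]
    field_simp
    ring

theorem hasDerivAt_half (t : ℝ) : HasDerivAt (fun t : ℝ => t / 2) (1 / 2) t := by
  simpa using (hasDerivAt_id t).div_const 2

theorem hasDerivAt_sq_div_eight (t : ℝ) : HasDerivAt (fun t : ℝ => t ^ 2 / 8) (t / 4) t :=
  ((hasDerivAt_pow 2 t).div_const 8).congr_deriv (by push_cast; ring)

/-- The planar system `ẋ₁ = 1/2`, `ẋ₂ = u₄(x₁,x₂)` admits the two distinct
solutions `y₁(t) = (t/2, 0)` and `y₂(t) = (t/2, t²/8)` on `[0,∞)` with initial condition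
`(0,0)`; hence solutions from the origin are non-unique. -/
theorem stmt_15 :
    ((fun t : ℝ => ((t / 2, 0) : ℝ × ℝ)) 0 = (0, 0)) ∧
    ((fun t : ℝ => ((t / 2, t ^ 2 / 8) : ℝ × ℝ)) 0 = (0, 0)) ∧
    (∀ t : ℝ, 0 ≤ t → HasDerivWithinAt (fun t : ℝ => ((t / 2, 0) : ℝ × ℝ))
      (1 / 2, u4 (t / 2, 0)) (Ici 0) t) ∧
    (∀ t : ℝ, 0 ≤ t → HasDerivWithinAt (fun t : ℝ => ((t / 2, t ^ 2 / 8) : ℝ × ℝ))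
      (1 / 2, u4 (t / 2, t ^ 2 / 8)) (Ici 0) t) ∧
    (∀ t : ℝ, 0 < t → ((t / 2, 0) : ℝ × ℝ) ≠ (t / 2, t ^ 2 / 8)) := by
  refine ⟨by norm_num, by norm_num, fun t _ => ?_, fun t ht => ?_, fun t ht => ?_⟩
  · rw [u4_of_nonpos le_rfl]
    exact ((hasDerivAt_half t).prodMk (hasDerivAt_const t 0)).hasDerivWithinAt
  · rw [u4_parabola ht]
    exact ((hasDerivAt_half t).prodMk (hasDerivAt_sq_div_eight t)).hasDerivWithinAt
  · simp only [ne_eq, Prod.mk.injEq, true_and]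
    positivity
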